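/- Let 0 < σ < n/2, e ∈ ℝ^n nonzero, R > 0 with R|e| > 10, and set U(y) = (1 + |y − Re|²)^{−(n−2σ)/2} and λ₁ = R|e| + 2. Then for all y with |y| > λ₁, one has U(y) − U^{λ₁}(y) < 0, where U^{λ}(y) = (λ/|y|)^{n−2σ}·U(λ²y/|y|²). -/

import Mathlib

/-!
With `p = n - 2σ > 0`, the bubble is `U = A ^ (-p/2)` for `A = 1 + ‖y - c‖²`, and its Kelvin
transform is `U^λ = B ^ (-p/2)` for `B = (‖y‖²/λ²) (1 + ‖λ² y/‖y‖² - c‖²)`. Expanding the squares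
gives `B - A = (‖y‖² - λ²)(‖c‖² + 1 - λ²)/λ²`, which is negative when `‖y‖ > λ` and
`‖c‖² + 1 < λ²`; as `t ↦ t ^ (-p/2)` is decreasing, `U < U^λ` there. For `c = R e` and
`λ₁ = R‖e‖ + 2` the second condition reads `0 < 4 R‖e‖ + 3`.
-/

open Real

variable {E : Type*} [NormedAddCommGroup E] [InnerProductSpace ℝ E]

noncomputable def bubble (p : ℝ) (c y : E) : ℝ := (1 + ‖y - c‖ ^ 2) ^ (-(p / 2))

noncomputable def kelvin (p lam : ℝ) (u : E → ℝ) (y : E) : ℝ :=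
  (lam / ‖y‖) ^ p * u ((lam ^ 2 / ‖y‖ ^ 2) • y)

theorem sq_norm_div_sq_mul_one_add_sq_norm_inversion_sub {lam : ℝ} (hlam : lam ≠ 0) {y : E}
    (hy : y ≠ 0) (c : E) :
    ‖y‖ ^ 2 / lam ^ 2 * (1 + ‖(lam ^ 2 / ‖y‖ ^ 2) • y - c‖ ^ 2) =
      1 + ‖y - c‖ ^ 2 + (‖y‖ ^ 2 - lam ^ 2) * (‖c‖ ^ 2 + 1 - lam ^ 2) / lam ^ 2 := by
  have hy' : ‖y‖ ≠ 0 := norm_ne_zero_iff.mpr hy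
  rw [norm_sub_sq_real, norm_sub_sq_real, real_inner_smul_left, norm_smul, Real.norm_eq_abs,
    abs_of_nonneg (by positivity), mul_pow]
  field_simp
  ring

theorem kelvin_bubble {p lam : ℝ} (hlam : 0 < lam) {y : E} (hy : y ≠ 0) (c : E) :
    kelvin p lam (bubble p c) y =
      (‖y‖ ^ 2 / lam ^ 2 * (1 + ‖(lam ^ 2 / ‖y‖ ^ 2) • y - c‖ ^ 2)) ^ (-(p / 2)) := by
  have hy' : 0 < ‖y‖ := norm_pos_iff.mpr hy
  rw [kelvin, bubble, mul_rpow (by positivity) (by positivity)]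
  congr 1
  rw [← div_pow, ← inv_div, ← rpow_natCast, ← rpow_mul (by positivity),
    inv_rpow (by positivity), ← rpow_neg (by positivity)]
  ring_nf

theorem bubble_lt_kelvin_bubble {p lam : ℝ} (hp : 0 < p) (hlam : 0 < lam) {c y : E}
    (hc : ‖c‖ ^ 2 + 1 < lam ^ 2) (hy : lam < ‖y‖) :
    bubble p c y < kelvin p lam (bubble p c) y := by
  have hy0 : y ≠ 0 := norm_pos_iff.mp (hlam.trans hy)
  have hgap : (‖y‖ ^ 2 - lam ^ 2) * (‖c‖ ^ 2 + 1 - lam ^ 2) / lam ^ 2 < 0 :=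
    div_neg_of_neg_of_pos (mul_neg_of_pos_of_neg (by nlinarith) (by linarith)) (by positivity)
  have hidentity := sq_norm_div_sq_mul_one_add_sq_norm_inversion_sub hlam.ne' hy0 c
  have hB : 0 < ‖y‖ ^ 2 / lam ^ 2 * (1 + ‖(lam ^ 2 / ‖y‖ ^ 2) • y - c‖ ^ 2) :=
    mul_pos (div_pos (pow_pos (hlam.trans hy) 2) (pow_pos hlam 2)) (by positivity)
  rw [kelvin_bubble hlam hy0, bubble]
  exact rpow_lt_rpow_of_neg hB (by linarith) (by linarith)

theorem stmt_8_general (n : ℕ) (σ : ℝ) (hn : 2 * σ < n)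
    (e : EuclideanSpace ℝ (Fin n)) (R : ℝ) (hRe : 10 < R * ‖e‖)
    (U : EuclideanSpace ℝ (Fin n) → ℝ)
    (hU : ∀ y, U y = (1 + ‖y - R • e‖ ^ 2) ^ (-(((n : ℝ) - 2 * σ) / 2)))
    (lam₁ : ℝ) (hlam₁ : lam₁ = R * ‖e‖ + 2) :
    ∀ y : EuclideanSpace ℝ (Fin n), lam₁ < ‖y‖ →
      U y - (lam₁ / ‖y‖) ^ ((n : ℝ) - 2 * σ) * U ((lam₁ ^ 2 / ‖y‖ ^ 2) • y) < 0 := by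
  intro y hy
  have hUbubble : U = bubble ((n : ℝ) - 2 * σ) (R • e) := funext hU
  have hc : ‖R • e‖ ^ 2 + 1 < lam₁ ^ 2 := by
    rw [norm_smul, Real.norm_eq_abs, mul_pow, sq_abs, ← mul_pow, hlam₁]
    nlinarith
  rw [sub_neg, hUbubble]
  exact bubble_lt_kelvin_bubble (by linarith) (by linarith) hc hy

theorem stmt_8 (n : ℕ) (σ : ℝ) (hσ : 0 < σ) (hn : 2 * σ < n)
    (e : EuclideanSpace ℝ (Fin n)) (he : e ≠ 0) (R : ℝ) (hR : 0 < R) (hRe : 10 < R * ‖e‖)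
    (U : EuclideanSpace ℝ (Fin n) → ℝ)
    (hU : ∀ y, U y = (1 + ‖y - R • e‖ ^ 2) ^ (-(((n : ℝ) - 2 * σ) / 2)))
    (lam₁ : ℝ) (hlam₁ : lam₁ = R * ‖e‖ + 2) :
    ∀ y : EuclideanSpace ℝ (Fin n), lam₁ < ‖y‖ →
      U y - (lam₁ / ‖y‖) ^ ((n : ℝ) - 2 * σ) * U ((lam₁ ^ 2 / ‖y‖ ^ 2) • y) < 0 :=
  stmt_8_general n σ hn e R hRe U hU lam₁ hlam₁
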